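/- Let k ≥ 5 be an integer and let z satisfy 0 < z ≤ δ_k = arsinh(cot(2π/k)). Then the Lebesgue double integral of (x − y)^{−2} over the plane region Ω* = {(x,y) ∈ ℝ² : 0 < x < tan(π/k), −1/x ≤ y < −tan(π/k), and D(x,y) ≤ z} equals (π/k)·sinh z. -/

import Mathlib

open Real MeasureTheory

/-- The geodesic of the upper half-plane with endpoints `x` and `y` at infinity:
the Euclidean semicircle with center `(x+y)/2` and radius `|x-y|/2`. -/
def geodesicUHP (x y : ℝ) : Set UpperHalfPlane :=
  {w : UpperHalfPlane | ‖(w : ℂ) - (((x + y) / 2 : ℝ) : ℂ)‖ = |x - y| / 2}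

/-- The hyperbolic distance from the point `i` of the upper half-plane to the geodesic
with endpoints `x`, `y` at infinity. -/
noncomputable def D (x y : ℝ) : ℝ :=
  Metric.infDist UpperHalfPlane.I (geodesicUHP x y)

lemma cosh_dist_I (w : UpperHalfPlane) :
    Real.cosh (dist UpperHalfPlane.I w) =
      ((w : ℂ).re ^ 2 + (w : ℂ).im ^ 2 + 1) / (2 * (w : ℂ).im) := by
  have him : (0:ℝ) < (w : ℂ).im := w.2
  rw [UpperHalfPlane.cosh_dist, Complex.dist_eq, Complex.sq_norm, Complex.normSq_apply]
  have h1 : (UpperHalfPlane.I : ℂ) = Complex.I := rfl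
  have h2 : (UpperHalfPlane.I).im = 1 := rfl
  rw [h1, h2]
  simp only [Complex.sub_re, Complex.sub_im, Complex.I_re, Complex.I_im, UpperHalfPlane.im]
  field_simp
  ring

lemma mem_geodesic_iff (x y : ℝ) (w : UpperHalfPlane) :
    w ∈ geodesicUHP x y ↔
      ((w:ℂ).re - (x+y)/2)^2 + (w:ℂ).im^2 = ((x-y)/2)^2 := by
  have h2 : (0:ℝ) ≤ |x-y|/2 := by positivity
  constructor
  · intro hw
    have := congrArg (· ^ 2) hw
    simp only [Complex.sq_norm, Complex.normSq_apply] at this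
    simp only [Complex.sub_re, Complex.sub_im, Complex.ofReal_re, Complex.ofReal_im] at this
    rw [div_pow, sq_abs] at this
    convert this using 1 <;> ring
  · intro h
    have habs : ‖(w : ℂ) - (((x + y) / 2 : ℝ) : ℂ)‖ ^ 2 = (|x-y|/2)^2 := by
      simp only [Complex.sq_norm, Complex.normSq_apply, Complex.sub_re, Complex.sub_im,
        Complex.ofReal_re, Complex.ofReal_im]
      rw [div_pow, sq_abs]
      convert h using 1 <;> ring
    exact (sq_eq_sq₀ (norm_nonneg _) h2).1 habs

lemma D_eq {x y : ℝ} (hx : 0 < x) (hy : y < 0) (hB : 0 ≤ 1 + x * y) :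
    D x y = Real.arsinh ((1 + x * y) / (x - y)) := by
  have hxy : (0:ℝ) < x - y := by linarith
  set u := (1 + x*y)/(x-y) with hu_def
  have hu : 0 ≤ u := div_nonneg hB hxy.le
  set t := Real.sqrt ((1+x^2)*(1+y^2)) with ht_def
  have ht2 : t^2 = (1+x^2)*(1+y^2) := Real.sq_sqrt (by positivity)
  have ht0 : 0 < t := Real.sqrt_pos.2 (by positivity)
  have hM : (0:ℝ) < x^2 + y^2 + 2 := by positivity
  have hcoshu : Real.cosh (Real.arsinh u) = t / (x - y) := by
    rw [Real.cosh_arsinh]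
    rw [show 1 + u^2 = (t/(x-y))^2 by
      rw [hu_def, div_pow, div_pow, ht2]; field_simp; ring]
    exact Real.sqrt_sq (by positivity)
  have hη : (0:ℝ) < ((x-y)*t/(x^2+y^2+2) : ℝ) := by positivity
  set w₀ : UpperHalfPlane :=
    ⟨⟨(x+y)*(1+x*y)/(x^2+y^2+2), (x-y)*t/(x^2+y^2+2)⟩, hη⟩ with hw₀_def
  have hre : (w₀ : ℂ).re = (x+y)*(1+x*y)/(x^2+y^2+2) := rfl
  have him : (w₀ : ℂ).im = (x-y)*t/(x^2+y^2+2) := rfl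
  have hmem : w₀ ∈ geodesicUHP x y := by
    rw [mem_geodesic_iff, hre, him]
    rw [div_pow, mul_pow (x-y) t, ht2]
    field_simp
    ring
  have hne : (geodesicUHP x y).Nonempty := ⟨w₀, hmem⟩
  have hdist0 : dist UpperHalfPlane.I w₀ = Real.arsinh u := by
    have key : ((x+y)*(1+x*y)/(x^2+y^2+2))^2 + ((x-y)*t/(x^2+y^2+2))^2 + 1
        = 2*t^2/(x^2+y^2+2) := by
      rw [div_pow, div_pow, mul_pow (x-y) t, ht2]
      field_simp
      ring
    have h1 : Real.cosh (dist UpperHalfPlane.I w₀) = Real.cosh (Real.arsinh u) := by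
      rw [cosh_dist_I, hcoshu, hre, him, key]
      rw [div_eq_div_iff (by positivity) hxy.ne']
      field_simp
    have e1 := Real.cosh_le_cosh.1 h1.le
    have e2 := Real.cosh_le_cosh.1 h1.ge
    have habs : |dist UpperHalfPlane.I w₀| = |Real.arsinh u| := le_antisymm e1 e2
    rwa [abs_of_nonneg dist_nonneg, abs_of_nonneg (Real.arsinh_nonneg_iff.2 hu)] at habs
  have hlow : ∀ w ∈ geodesicUHP x y, Real.arsinh u ≤ dist UpperHalfPlane.I w := by
    intro w hw
    have hη' : (0:ℝ) < (w:ℂ).im := w.2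
    have hcirc := (mem_geodesic_iff x y w).1 hw
    set ξ := (w:ℂ).re
    set η := (w:ℂ).im
    have identity : (x-y)^2*(ξ^2+η^2+1)^2 - 4*η^2*((1+x^2)*(1+y^2))
        = ((x^2+y^2+2)*ξ - (x+y)*(1+x*y))^2 := by
      linear_combination ((x-y)^2*(2*ξ^2 + η^2 + ((x-y)/2)^2 - (ξ-(x+y)/2)^2 + 2)
        - 4*(1+x^2)*(1+y^2)) * hcirc
    have hQ : t/(x-y) ≤ (ξ^2+η^2+1)/(2*η) := by
      rw [div_le_div_iff₀ hxy (by positivity)]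
      have hsq : (t*(2*η))^2 ≤ ((ξ^2+η^2+1)*(x-y))^2 := by
        rw [mul_pow, mul_pow, ht2]
        linarith [identity, sq_nonneg ((x^2+y^2+2)*ξ - (x+y)*(1+x*y))]
      calc t*(2*η) = Real.sqrt ((t*(2*η))^2) := (Real.sqrt_sq (by positivity)).symm
        _ ≤ Real.sqrt (((ξ^2+η^2+1)*(x-y))^2) := Real.sqrt_le_sqrt hsq
        _ = (ξ^2+η^2+1)*(x-y) := Real.sqrt_sq (by positivity)
    have hcosh_le : Real.cosh (Real.arsinh u) ≤ Real.cosh (dist UpperHalfPlane.I w) := by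
      rw [hcoshu, cosh_dist_I]
      exact hQ
    have := Real.cosh_le_cosh.1 hcosh_le
    rwa [abs_of_nonneg dist_nonneg, abs_of_nonneg (Real.arsinh_nonneg_iff.2 hu)] at this
  refine le_antisymm ?_ ?_
  · rw [← hdist0]; exact Metric.infDist_le_dist_of_mem hmem
  · by_contra h
    push_neg at h
    obtain ⟨w, hw, hlt⟩ := (Metric.infDist_lt_iff hne).1 h
    linarith [hlow w hw]

lemma regionEq (a s z : ℝ) (ha0 : 0 < a) (hs0 : 0 < s) (hz : z = Real.arsinh s)
    (hkey : ∀ x : ℝ, 0 < x → x < a → (s*x-1)/(x+s) < -a) :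
    {p : ℝ × ℝ | 0 < p.1 ∧ p.1 < a ∧
      -1 / p.1 ≤ p.2 ∧ p.2 < -a ∧ D p.1 p.2 ≤ z} =
    {p : ℝ × ℝ | 0 < p.1 ∧ p.1 < a ∧ -1 / p.1 ≤ p.2 ∧
      p.2 ≤ (s * p.1 - 1) / (p.1 + s)} := by
  have hxs : ∀ x : ℝ, 0 < x → 0 < x + s := fun x hx => by positivity
  ext ⟨x, y⟩
  simp only [Set.mem_setOf_eq]
  constructor
  · rintro ⟨hx, hxa, hy1, hy2, hD⟩
    refine ⟨hx, hxa, hy1, ?_⟩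
    have hy0 : y < 0 := by linarith
    have hB : 0 ≤ 1 + x * y := by
      have := (div_le_iff₀ hx).1 hy1
      nlinarith
    rw [D_eq hx hy0 hB, hz] at hD
    have hu := Real.arsinh_le_arsinh.1 hD
    rw [div_le_iff₀ (by linarith : (0:ℝ) < x - y)] at hu
    rw [le_div_iff₀ (hxs x hx)]
    nlinarith
  · rintro ⟨hx, hxa, hy1, hy2⟩
    have hyma : y < -a := lt_of_le_of_lt hy2 (hkey x hx hxa)
    have hy0 : y < 0 := by linarith
    have hB : 0 ≤ 1 + x * y := by
      have := (div_le_iff₀ hx).1 hy1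
      nlinarith
    refine ⟨hx, hxa, hy1, hyma, ?_⟩
    rw [D_eq hx hy0 hB, hz]
    apply Real.arsinh_le_arsinh.2
    rw [div_le_iff₀ (by linarith : (0:ℝ) < x - y)]
    rw [le_div_iff₀ (hxs x hx)] at hy2
    nlinarith

lemma cot_double {θ : ℝ} (h0 : 0 < θ) (h2 : θ < π/2) :
    Real.cot (2*θ) = (1 - Real.tan θ ^ 2) / (2 * Real.tan θ) := by
  have hs : 0 < Real.sin θ := Real.sin_pos_of_pos_of_lt_pi h0 (by linarith [Real.pi_pos])
  have hc : 0 < Real.cos θ := Real.cos_pos_of_mem_Ioo ⟨by linarith, h2⟩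
  rw [Real.cot_eq_cos_div_sin, Real.cos_two_mul', Real.sin_two_mul, Real.tan_eq_sin_div_cos]
  field_simp

lemma integralEval (a s : ℝ) (ha0 : 0 < a) (hs0 : 0 < s) (hsa : s * a < 1) :
    ∫ p : ℝ × ℝ in {p : ℝ × ℝ | 0 < p.1 ∧ p.1 < a ∧ -1 / p.1 ≤ p.2 ∧
        p.2 ≤ (s * p.1 - 1) / (p.1 + s)}, 1 / (p.1 - p.2) ^ 2
      = Real.arctan a * s := by
  set Y : ℝ → ℝ := fun x => (s*x-1)/(x+s) with hY_def
  clear_value Y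
  set S' : Set (ℝ × ℝ) :=
    {p : ℝ × ℝ | 0 < p.1 ∧ p.1 < a ∧ -1/p.1 ≤ p.2 ∧ p.2 ≤ Y p.1} with hS'_def
  clear_value S'
  have hmemS' : ∀ p : ℝ × ℝ,
      p ∈ S' ↔ (0 < p.1 ∧ p.1 < a ∧ -1/p.1 ≤ p.2 ∧ p.2 ≤ Y p.1) := by
    intro p; rw [hS'_def]; rfl
  have hxs : ∀ x : ℝ, 0 < x → 0 < x + s := fun x hx => by positivity
  have hYneg : ∀ x : ℝ, 0 < x → x < a → Y x < 0 := by
    intro x hx hxa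
    rw [hY_def]
    apply div_neg_of_neg_of_pos _ (hxs x hx)
    nlinarith
  have hYge : ∀ x : ℝ, 0 < x → -1/x ≤ Y x := by
    intro x hx
    rw [hY_def, div_le_div_iff₀ hx (hxs x hx)]
    nlinarith [mul_pos hs0 (mul_pos hx hx)]
  have hxY : ∀ x : ℝ, 0 < x → x < a → 0 < x - Y x := by
    intro x hx hxa
    have := hYneg x hx hxa; linarith
  have hfm : Measurable (fun p : ℝ × ℝ => 1/(p.1 - p.2)^2) := by
    apply Measurable.div measurable_const
    exact ((measurable_fst.sub measurable_snd).pow measurable_const)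
  have hSm : MeasurableSet S' := by
    rw [hS'_def, hY_def]
    apply MeasurableSet.inter
    · exact measurableSet_lt measurable_const measurable_fst
    apply MeasurableSet.inter
    · exact measurableSet_lt measurable_fst measurable_const
    apply MeasurableSet.inter
    · exact measurableSet_le (measurable_const.div measurable_fst) measurable_snd
    · exact measurableSet_le measurable_snd
        (((measurable_const.mul measurable_fst).sub measurable_const).div
          (measurable_fst.add measurable_const))
  set F : ℝ × ℝ → ℝ := S'.indicator (fun p : ℝ × ℝ => 1/(p.1 - p.2)^2) with hF_def
  clear_value F
  have hFnn : ∀ p, 0 ≤ F p := by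
    intro p
    rw [hF_def]
    apply Set.indicator_nonneg
    intro q _
    positivity
  have hsect : ∀ x : ℝ, 0 < x → x < a →
      (fun y => F (x, y)) = (Set.Icc (-1/x) (Y x)).indicator (fun y => 1/(x - y)^2) := by
    intro x hx hxa
    funext y
    by_cases hy : y ∈ Set.Icc (-1/x) (Y x)
    · rw [Set.indicator_of_mem hy, hF_def, Set.indicator_of_mem]
      exact (hmemS' (x, y)).2 ⟨hx, hxa, hy.1, hy.2⟩
    · rw [Set.indicator_of_notMem hy, hF_def, Set.indicator_of_notMem]
      intro hmem
      have := (hmemS' (x, y)).1 hmem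
      exact hy ⟨this.2.2.1, this.2.2.2⟩
  have hsect0 : ∀ x : ℝ, ¬ (0 < x ∧ x < a) → (fun y => F (x, y)) = fun _ => 0 := by
    intro x hx
    funext y
    rw [hF_def, Set.indicator_of_notMem]
    intro hmem
    have := (hmemS' (x, y)).1 hmem
    exact hx ⟨this.1, this.2.1⟩
  have hcont : ∀ x : ℝ, 0 < x → x < a →
      ContinuousOn (fun y => 1/(x - y)^2) (Set.Icc (-1/x) (Y x)) := by
    intro x hx hxa
    apply ContinuousOn.div continuousOn_const
    · exact ((continuous_const.sub continuous_id).pow 2).continuousOn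
    · intro y hy
      have hyY : y ≤ Y x := hy.2
      have h1 := hYneg x hx hxa
      exact pow_ne_zero 2 (sub_ne_zero.2 (ne_of_gt (show x > y by linarith)))
  have hinner : ∀ x : ℝ, ∫ y, F (x, y) = (Set.Ioo 0 a).indicator (fun x => s/(x^2+1)) x := by
    intro x
    by_cases hx : 0 < x ∧ x < a
    · obtain ⟨hx0, hxa⟩ := hx
      rw [hsect x hx0 hxa, Set.indicator_of_mem (Set.mem_Ioo.2 ⟨hx0, hxa⟩)]
      rw [integral_indicator measurableSet_Icc]
      have hABle : -1/x ≤ Y x := hYge x hx0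
      have hYn := hYneg x hx0 hxa
      have hxYx := hxY x hx0 hxa
      rw [MeasureTheory.integral_Icc_eq_integral_Ioc,
        ← intervalIntegral.integral_of_le hABle]
      have hftc : ∫ y in (-1/x)..(Y x), 1/(x - y)^2
          = (x - Y x)⁻¹ - (x - (-1/x))⁻¹ := by
        apply intervalIntegral.integral_eq_sub_of_hasDerivAt (f := fun y => (x - y)⁻¹)
        · intro y hy
          rw [Set.uIcc_of_le hABle] at hy
          have hxy : x - y ≠ 0 := by
            have : y ≤ Y x := hy.2
            intro h
            nlinarith
          have h1 : HasDerivAt (fun y : ℝ => x - y) (-1) y := by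
            simpa using (hasDerivAt_id y).const_sub x
          have h2 := h1.inv hxy
          rw [show (1:ℝ)/(x-y)^2 = - -1/(x-y)^2 by ring]
          exact h2
        · apply ContinuousOn.intervalIntegrable
          rw [Set.uIcc_of_le hABle]
          exact hcont x hx0 hxa
      rw [hftc]
      have e1 : x - Y x = (x^2+1)/(x+s) := by
        rw [hY_def]
        field_simp
        ring
      have e2 : x - (-1/x) = (x^2+1)/x := by
        field_simp
        ring
      rw [e1, e2, inv_div, inv_div, div_sub_div_same, add_sub_cancel_left]
    · rw [hsect0 x hx, Set.indicator_of_notMem]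
      · simp
      · intro hmem
        exact hx ⟨hmem.1, hmem.2⟩
  have hgoalset : {p : ℝ × ℝ | 0 < p.1 ∧ p.1 < a ∧ -1 / p.1 ≤ p.2 ∧
      p.2 ≤ (s * p.1 - 1) / (p.1 + s)} = S' := by
    simp only [hS'_def, hY_def]
  rw [hgoalset, ← MeasureTheory.integral_indicator hSm, ← hF_def,
    MeasureTheory.Measure.volume_eq_prod]
  have hmeas : AEStronglyMeasurable F ((volume : Measure ℝ).prod volume) := by
    rw [← MeasureTheory.Measure.volume_eq_prod, hF_def]
    exact (hfm.indicator hSm).aestronglyMeasurable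
  have hFint : Integrable F ((volume : Measure ℝ).prod volume) := by
    refine (MeasureTheory.integrable_prod_iff hmeas).2 ⟨?_, ?_⟩
    · apply Filter.Eventually.of_forall
      intro x
      by_cases hx : 0 < x ∧ x < a
      · rw [hsect x hx.1 hx.2]
        rw [MeasureTheory.integrable_indicator_iff measurableSet_Icc]
        exact (hcont x hx.1 hx.2).integrableOn_compact isCompact_Icc
      · rw [hsect0 x hx]
        exact integrable_zero _ _ _
    · have hnorm : (fun x => ∫ y, ‖F (x, y)‖)
          = (Set.Ioo 0 a).indicator (fun x => s/(x^2+1)) := by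
        funext x
        rw [← hinner x]
        congr 1
        funext y
        exact Real.norm_of_nonneg (hFnn _)
      rw [hnorm]
      rw [MeasureTheory.integrable_indicator_iff measurableSet_Ioo]
      have hgc : Continuous (fun x : ℝ => s/(x^2+1)) :=
        continuous_const.div ((continuous_pow 2).add continuous_const)
          (fun x => by positivity)
      exact (hgc.integrableOn_Icc (a := 0) (b := a)).mono_set Set.Ioo_subset_Icc_self
  rw [MeasureTheory.integral_prod _ hFint]
  have hrw : (fun x => ∫ y, F (x, y)) = (Set.Ioo 0 a).indicator (fun x => s/(x^2+1)) :=
    funext hinner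
  rw [hrw, MeasureTheory.integral_indicator measurableSet_Ioo,
    ← MeasureTheory.integral_Ioc_eq_integral_Ioo,
    ← intervalIntegral.integral_of_le ha0.le]
  have hgeq : (fun x : ℝ => s/(x^2+1)) = fun x : ℝ => s * (1+x^2)⁻¹ := by
    funext x
    rw [div_eq_mul_inv, add_comm]
  rw [hgeq, intervalIntegral.integral_const_mul]
  rw [integral_inv_one_add_sq, Real.arctan_zero, sub_zero]
  ring

/-- For `k ≥ 5` and `0 < z ≤ δ_k = arsinh (cot (2π/k))`, the integral of `(x-y)⁻²` over
the region of pairs `(x,y)` with `0 < x < tan (π/k)`, `-1/x ≤ y < -tan (π/k)` and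
`D x y ≤ z` equals `(π/k) · sinh z`. -/
theorem LambdaStar_small (k : ℕ) (hk : 5 ≤ k) (z : ℝ) (hz0 : 0 < z)
    (hz : z ≤ Real.arsinh (Real.cot (2 * π / k))) :
    ∫ p : ℝ × ℝ in {p : ℝ × ℝ | 0 < p.1 ∧ p.1 < Real.tan (π / k) ∧
        -1 / p.1 ≤ p.2 ∧ p.2 < -Real.tan (π / k) ∧ D p.1 p.2 ≤ z},
        1 / (p.1 - p.2) ^ 2 =
      π / k * Real.sinh z := by
  have hπ := Real.pi_pos
  have hk5 : (5:ℝ) ≤ (k:ℝ) := by exact_mod_cast hk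
  have hk0 : (0:ℝ) < k := by linarith
  have hθ0 : 0 < π / k := by positivity
  have hθ5 : π / k ≤ π / 5 := by
    apply div_le_div_of_nonneg_left hπ.le (by norm_num) hk5
  have hθ4 : π / k < π / 4 := lt_of_le_of_lt hθ5 (by nlinarith)
  have hθ2 : π / k < π / 2 := lt_of_le_of_lt hθ5 (by nlinarith)
  have ha0 : 0 < Real.tan (π / k) := Real.tan_pos_of_pos_of_lt_pi_div_two hθ0 hθ2
  have ha1 : Real.tan (π / k) < 1 := by
    rw [← Real.tan_pi_div_four]
    exact Real.tan_lt_tan_of_nonneg_of_lt_pi_div_two hθ0.le (by linarith) hθ4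
  have hs0 : 0 < Real.sinh z := Real.sinh_pos_iff.2 hz0
  have hcot : Real.cot (2*π/k) = (1 - Real.tan (π / k)^2)/(2*Real.tan (π / k)) := by
    rw [show (2*π/(k:ℝ)) = 2*(π/k) by ring]
    exact cot_double hθ0 hθ2
  have hsle : Real.sinh z ≤ (1 - Real.tan (π / k)^2)/(2*Real.tan (π / k)) := by
    have h1 := Real.sinh_le_sinh.2 hz
    rwa [Real.sinh_arsinh, hcot] at h1
  have hsle2 : Real.sinh z * (2*Real.tan (π / k)) ≤ 1 - Real.tan (π / k)^2 := by
    rwa [le_div_iff₀ (by positivity)] at hsle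
  have hkey : ∀ x : ℝ, 0 < x → x < Real.tan (π / k) →
      (Real.sinh z * x - 1)/(x + Real.sinh z) < -Real.tan (π / k) := by
    intro x hx hxa
    set a := Real.tan (π / k) with ha_def
    set s := Real.sinh z with hs_def
    clear_value a s
    rw [div_lt_iff₀ (by positivity)]
    have h4 : (2*a)*(s*(x+a)) ≤ (1-a^2)*(x+a) := by
      nlinarith [mul_le_mul_of_nonneg_right hsle2 (by linarith : (0:ℝ) ≤ x+a)]
    have h5 : (1-a^2)*(x+a) < (2*a)*(1-a*x) := by
      nlinarith [mul_pos (show (0:ℝ) < 1+a^2 by positivity) (sub_pos.2 hxa)]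
    have h7 : s*(x+a) < 1 - a*x :=
      lt_of_mul_lt_mul_left (lt_of_le_of_lt h4 h5) (by positivity)
    nlinarith
  rw [regionEq (Real.tan (π / k)) (Real.sinh z) z ha0 hs0 (Real.arsinh_sinh z).symm hkey]
  rw [integralEval (Real.tan (π / k)) (Real.sinh z) ha0 hs0
    (by nlinarith [sq_nonneg (Real.tan (π / k))])]
  rw [Real.arctan_tan (by linarith) hθ2]
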